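/- With the notation of the band-matrix setup: there exists a polynomial A with real coefficients, of degree at most M, such that |b_m^n| ≤ A(n) for all m, n ∈ ℕ. -/

import Mathlib

open MeasureTheory

/-- The wavepacket basis function `ψ_{k,n}(x) = (x+i)^{-(k+1)} ((x-i)/(x+i))^n`. -/
noncomputable def psi (k n : ℤ) : ℝ → ℂ := fun x =>
  ((x : ℂ) + Complex.I) ^ (-(k + 1)) * (((x : ℂ) - Complex.I) / ((x : ℂ) + Complex.I)) ^ n

/-- The sorting index `ñ(k, n) = ⌊-(k+1)/2⌋ + (-1)^{n+k+1} ⌊(n+1)/2⌋`. -/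
noncomputable def ntilde (k : ℤ) (n : ℕ) : ℤ :=
  ⌊(-(k : ℚ) - 1) / 2⌋ + (if Even ((n : ℤ) + k + 1) then 1 else -1) * ⌊((n : ℚ) + 1) / 2⌋

/-- The sorted basis function `e^{(k)}_n = π^{-1/2} ψ_{k, ñ(k,n)}`. -/
noncomputable def ebasis (k : ℤ) (n : ℕ) : ℝ → ℂ := fun x =>
  (((Real.sqrt Real.pi)⁻¹ : ℝ) : ℂ) * psi k (ntilde k n) x

/-- `s₀ = max_{0 ≤ m ≤ M} (deg p_m - m)`. -/
noncomputable def s0 (M : ℕ) (p : ℕ → Polynomial ℂ) : ℤ :=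
  Finset.sup' (Finset.range (M + 1)) Finset.nonempty_range_add_one
    fun m => ((p m).natDegree : ℤ) - (m : ℤ)

/-- The differential operator `(P f)(x) = Σ_{m=0}^{M} p_m(x) f^{(m)}(x)`. -/
noncomputable def Pop (M : ℕ) (p : ℕ → Polynomial ℂ) (f : ℝ → ℂ) : ℝ → ℂ := fun x =>
  ∑ m ∈ Finset.range (M + 1), (p m).eval (x : ℂ) * deriv^[m] f x

/-- The band matrix `b_m^n = ∫ (P e_n)(x) conj(e◊_m(x)) (x²+1)^{k₀◊} dx`, where
`e_n = e^{(k₀)}_n` and `e◊_m = e^{(k₀◊)}_m`. -/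
noncomputable def bmat (M : ℕ) (p : ℕ → Polynomial ℂ) (k₀ kd : ℤ) (m n : ℕ) : ℂ :=
  ∫ x : ℝ, Pop M p (ebasis k₀ n) x * (starRingEnd ℂ) (ebasis kd m x) *
    ((((x ^ 2 + 1) ^ kd : ℝ)) : ℂ)

/-- The weighted measure `(x² + 1)^k dx` on `ℝ`. -/
noncomputable def wMeasure (k : ℤ) : Measure ℝ :=
  volume.withDensity fun x => ENNReal.ofReal ((x ^ 2 + 1) ^ k)

/-!
Write `r(x) = ‖x + i‖ = √(1 + x²)`. The basis function `e^{(k)}_n` is `π^{-1/2} (x - i)^a (x + i)^b`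
with `a = ñ(k, n)` and `a + b = -(k + 1)`, so `|a| + |b| = O(n)`. Differentiation sends
`(x - i)^a (x + i)^b` to `a (x - i)^{a-1} (x + i)^b + b (x - i)^a (x + i)^{b-1}`, so the `m`-th
derivative is at most `(|a| + |b| + m)^m r^{a+b-m}`: a polynomial of degree `m` in `n` times
`r^{-(k+1)-m}`. Together with `|p_m(x)| ≤ ‖p_m‖₁ r^{deg p_m}` this bounds `|P e_n|` by a polynomial
of degree `M` in `n` times `r^{s₀ - k₀ - 1}`. Multiplying by `|e◊_m| ≤ r^{-(k₀◊+1)}` and the weight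
`r^{2k₀◊}` leaves `r^{s₀ - k₀ + k₀◊ - 2} ≤ r^{-2} = (1 + x²)⁻¹`, whose integral is `π`.
-/

open Complex Polynomial

lemma ofReal_add_I_ne_zero (x : ℝ) : (x : ℂ) + I ≠ 0 := by
  intro h; simpa using congrArg Complex.im h

lemma ofReal_sub_I_ne_zero (x : ℝ) : (x : ℂ) - I ≠ 0 := by
  intro h; simpa using congrArg Complex.im h

lemma norm_ofReal_sub_I (x : ℝ) : ‖(x : ℂ) - I‖ = ‖(x : ℂ) + I‖ := by
  rw [← Complex.norm_conj]; simp

lemma sq_norm_ofReal_add_I (x : ℝ) : ‖(x : ℂ) + I‖ ^ 2 = 1 + x ^ 2 := by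
  rw [Complex.sq_norm, Complex.normSq_apply]; simp; ring

lemma one_le_norm_ofReal_add_I (x : ℝ) : 1 ≤ ‖(x : ℂ) + I‖ := by
  have := sq_norm_ofReal_add_I x
  nlinarith [sq_nonneg x, norm_nonneg ((x : ℂ) + I)]

lemma norm_ofReal_le_norm_ofReal_add_I (x : ℝ) : ‖(x : ℂ)‖ ≤ ‖(x : ℂ) + I‖ := by
  simpa using abs_re_le_norm ((x : ℂ) + I)

lemma norm_eval_le_sum_norm_coeff_mul_pow (q : ℂ[X]) {z : ℂ} {R : ℝ} (hR : 1 ≤ R)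
    (hz : ‖z‖ ≤ R) : ‖q.eval z‖ ≤ (q.sum fun _ a ↦ ‖a‖) * R ^ q.natDegree := by
  rw [eval_eq_sum, Polynomial.sum_def, Polynomial.sum_def, Finset.sum_mul]
  refine (norm_sum_le _ _).trans (Finset.sum_le_sum fun i hi ↦ ?_)
  rw [norm_mul, norm_pow]
  gcongr
  calc ‖z‖ ^ i ≤ R ^ i := by gcongr
    _ ≤ R ^ q.natDegree := pow_le_pow_right₀ hR (le_natDegree_of_mem_supp i hi)

noncomputable def cayleyMonomial (a b : ℤ) (x : ℝ) : ℂ := ((x : ℂ) - I) ^ a * ((x : ℂ) + I) ^ b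

lemma norm_cayleyMonomial (a b : ℤ) (x : ℝ) :
    ‖cayleyMonomial a b x‖ = ‖(x : ℂ) + I‖ ^ (a + b) := by
  rw [cayleyMonomial, norm_mul, norm_zpow, norm_zpow, norm_ofReal_sub_I,
    zpow_add₀ (norm_ne_zero_iff.mpr (ofReal_add_I_ne_zero x))]

lemma analyticAt_cayleyMonomial (a b : ℤ) (x : ℝ) : AnalyticAt ℝ (cayleyMonomial a b) x := by
  have hlin : AnalyticAt ℝ (fun y : ℝ ↦ (y : ℂ)) x := ofRealCLM.analyticAt x
  exact ((hlin.sub analyticAt_const).zpow (ofReal_sub_I_ne_zero x)).mul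
    ((hlin.add analyticAt_const).zpow (ofReal_add_I_ne_zero x))

lemma hasDerivAt_ofReal_add_zpow (c : ℂ) (a : ℤ) {x : ℝ} (h : (x : ℂ) + c ≠ 0) :
    HasDerivAt (fun y : ℝ ↦ ((y : ℂ) + c) ^ a) (a * ((x : ℂ) + c) ^ (a - 1)) x := by
  simpa using ((hasDerivAt_zpow a _ (Or.inl h)).comp (x : ℂ)
    ((hasDerivAt_id _).add_const c)).comp_ofReal

lemma deriv_cayleyMonomial (a b : ℤ) :
    deriv (cayleyMonomial a b) =
      fun x ↦ a * cayleyMonomial (a - 1) b x + b * cayleyMonomial a (b - 1) x := by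
  funext x
  have hsub := hasDerivAt_ofReal_add_zpow (-I) a (x := x) (ofReal_sub_I_ne_zero x)
  simp only [← sub_eq_add_neg] at hsub
  have h : HasDerivAt (cayleyMonomial a b) _ x :=
    hsub.fun_mul (hasDerivAt_ofReal_add_zpow I b (ofReal_add_I_ne_zero x))
  rw [h.deriv, cayleyMonomial, cayleyMonomial]
  ring

lemma norm_iteratedDeriv_cayleyMonomial_le (m : ℕ) (a b : ℤ) (x : ℝ) :
    ‖iteratedDeriv m (cayleyMonomial a b) x‖ ≤
      (|(a : ℝ)| + |(b : ℝ)| + m) ^ m * ‖(x : ℂ) + I‖ ^ (a + b - m) := by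
  induction m generalizing a b with
  | zero => simp [norm_cayleyMonomial]
  | succ m ih =>
    set N : ℝ := |(a : ℝ)| + |(b : ℝ)| + (m + 1 : ℕ)
    set R : ℝ := ‖(x : ℂ) + I‖ ^ (a + b - (m + 1 : ℕ))
    have ha : ‖iteratedDeriv m (cayleyMonomial (a - 1) b) x‖ ≤ N ^ m * R := by
      refine (ih _ _).trans ?_
      rw [show a - 1 + b - m = a + b - (m + 1 : ℕ) by push_cast; ring]
      gcongr
      simp only [N]
      push_cast
      linarith [abs_sub ((a : ℝ)) 1, abs_one (α := ℝ)]
    have hb : ‖iteratedDeriv m (cayleyMonomial a (b - 1)) x‖ ≤ N ^ m * R := by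
      refine (ih _ _).trans ?_
      rw [show a + (b - 1) - m = a + b - (m + 1 : ℕ) by push_cast; ring]
      gcongr
      simp only [N]
      push_cast
      linarith [abs_sub ((b : ℝ)) 1, abs_one (α := ℝ)]
    have hsmooth (c d : ℤ) (k : ℂ) :
        ContDiffAt ℝ m (fun y ↦ k * cayleyMonomial c d y) x :=
      (analyticAt_const.mul (analyticAt_cayleyMonomial c d x)).contDiffAt
    rw [iteratedDeriv_succ', deriv_cayleyMonomial, iteratedDeriv_fun_add (hsmooth _ _ _)
      (hsmooth _ _ _), iteratedDeriv_const_mul_field, iteratedDeriv_const_mul_field]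
    calc _ ≤ |(a : ℝ)| * ‖iteratedDeriv m (cayleyMonomial (a - 1) b) x‖ +
          |(b : ℝ)| * ‖iteratedDeriv m (cayleyMonomial a (b - 1)) x‖ := by
          refine (norm_add_le _ _).trans_eq ?_
          rw [norm_mul, norm_mul, norm_intCast, norm_intCast]
      _ ≤ |(a : ℝ)| * (N ^ m * R) + |(b : ℝ)| * (N ^ m * R) := by gcongr
      _ = (|(a : ℝ)| + |(b : ℝ)|) * N ^ m * R := by ring
      _ ≤ N * N ^ m * R := by gcongr; simp only [N]; push_cast; linarith
      _ = N ^ (m + 1) * R := by ring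

lemma psi_eq_cayleyMonomial (k ν : ℤ) : psi k ν = cayleyMonomial ν (-(k + 1) - ν) := by
  funext x
  rw [psi, cayleyMonomial, div_zpow, div_eq_mul_inv, ← zpow_neg, sub_eq_add_neg (-(k + 1)),
    zpow_add₀ (ofReal_add_I_ne_zero x)]
  ring

lemma abs_floor_le_abs_add_one (y : ℚ) : ((|⌊y⌋| : ℤ) : ℚ) ≤ |y| + 1 := by
  rw [Int.cast_abs, abs_le]
  constructor <;> linarith [Int.sub_one_lt_floor y, Int.floor_le y, neg_abs_le y, le_abs_self y]

lemma abs_ntilde_le (k : ℤ) (n : ℕ) : |ntilde k n| ≤ |k| + n + 3 := by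
  have hsign : |(if Even ((n : ℤ) + k + 1) then 1 else -1 : ℤ)| = 1 := by split <;> simp
  have hfloor₁ := abs_floor_le_abs_add_one ((-(k : ℚ) - 1) / 2)
  have hfloor₂ := abs_floor_le_abs_add_one (((n : ℚ) + 1) / 2)
  have hk : |(-(k : ℚ) - 1) / 2| ≤ (|(k : ℚ)| + 1) / 2 := by
    rw [abs_div, abs_two, ← abs_neg, neg_sub, sub_neg_eq_add]
    gcongr
    exact (abs_add_le _ _).trans_eq (by rw [abs_one, add_comm])
  have hn : |((n : ℚ) + 1) / 2| = ((n : ℚ) + 1) / 2 := abs_of_nonneg (by positivity)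
  rw [ntilde]
  refine (abs_add_le _ _).trans ?_
  rw [abs_mul, hsign, one_mul]
  qify
  push_cast at hfloor₁ hfloor₂ ⊢
  linarith [abs_nonneg (k : ℚ)]

lemma norm_inv_sqrt_pi_le_one : ‖(((√Real.pi)⁻¹ : ℝ) : ℂ)‖ ≤ 1 := by
  rw [norm_real, Real.norm_of_nonneg (by positivity)]
  exact inv_le_one_of_one_le₀ (Real.one_le_sqrt.mpr (by linarith [Real.pi_gt_three]))

lemma norm_iteratedDeriv_ebasis_le (k : ℤ) (n m : ℕ) (x : ℝ) :
    ‖deriv^[m] (ebasis k n) x‖ ≤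
      (2 * n + 3 * |(k : ℝ)| + m + 7) ^ m * ‖(x : ℂ) + I‖ ^ (-(k + 1) - m) := by
  set a := ntilde k n
  have ha : |(a : ℝ)| ≤ |(k : ℝ)| + n + 3 := by exact_mod_cast abs_ntilde_le k n
  have hb : |((-(k + 1) - a : ℤ) : ℝ)| ≤ |(k : ℝ)| + 1 + |(a : ℝ)| := by
    push_cast
    refine (abs_sub _ _).trans ?_
    rw [abs_neg]
    linarith [abs_add_le (k : ℝ) 1, abs_one (α := ℝ)]
  rw [← iteratedDeriv_eq_iterate]
  change ‖iteratedDeriv m (fun y ↦ (((√Real.pi)⁻¹ : ℝ) : ℂ) * psi k a y) x‖ ≤ _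
  rw [iteratedDeriv_const_mul_field, norm_mul, psi_eq_cayleyMonomial]
  refine (mul_le_of_le_one_left (norm_nonneg _) norm_inv_sqrt_pi_le_one).trans ?_
  refine (norm_iteratedDeriv_cayleyMonomial_le m _ _ x).trans ?_
  rw [add_sub_cancel]
  have hbase : |(a : ℝ)| + |((-(k + 1) - a : ℤ) : ℝ)| + m ≤ 2 * n + 3 * |(k : ℝ)| + m + 7 := by
    linarith
  gcongr

-- `|ñ(k, n)| + |-(k + 1) - ñ(k, n)| + m ≤ 2n + 3|k| + M + 7` for `m ≤ M`.
noncomputable def bandBound (M : ℕ) (p : ℕ → ℂ[X]) (k : ℤ) : ℝ[X] :=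
  ∑ m ∈ Finset.range (M + 1),
    C ((p m).sum fun _ a ↦ ‖a‖) * (C 2 * X + C (3 * |(k : ℝ)| + M + 7)) ^ m

lemma natDegree_bandBound_le (M : ℕ) (p : ℕ → ℂ[X]) (k : ℤ) :
    (bandBound M p k).natDegree ≤ M := by
  refine natDegree_sum_le_of_forall_le _ _ fun m hm ↦ (natDegree_C_mul_le _ _).trans ?_
  refine natDegree_pow_le.trans ?_
  calc m * (C 2 * X + C _ : ℝ[X]).natDegree ≤ m * 1 := by gcongr; exact natDegree_linear_le
    _ ≤ M := by rw [mul_one]; exact Finset.mem_range_succ_iff.mp hm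

lemma norm_Pop_ebasis_le (M : ℕ) (p : ℕ → ℂ[X]) (k : ℤ) (n : ℕ) (x : ℝ) :
    ‖Pop M p (ebasis k n) x‖ ≤
      (bandBound M p k).eval (n : ℝ) * ‖(x : ℂ) + I‖ ^ (s0 M p - k - 1) := by
  set r := ‖(x : ℂ) + I‖
  have hr : 1 ≤ r := one_le_norm_ofReal_add_I x
  rw [Pop, bandBound, eval_finsetSum, Finset.sum_mul]
  refine (norm_sum_le _ _).trans (Finset.sum_le_sum fun m hm ↦ ?_)
  set K := (p m).sum fun _ a ↦ ‖a‖
  have hK : 0 ≤ K := Finset.sum_nonneg fun _ _ ↦ norm_nonneg _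
  have hdeg : ((p m).natDegree : ℤ) - m ≤ s0 M p :=
    Finset.le_sup' (fun m ↦ ((p m).natDegree : ℤ) - m) hm
  have hmM : (m : ℝ) ≤ M := by exact_mod_cast Finset.mem_range_succ_iff.mp hm
  have hcoeff : ‖(p m).eval (x : ℂ)‖ ≤ K * r ^ ((p m).natDegree : ℤ) := by
    rw [zpow_natCast]
    exact norm_eval_le_sum_norm_coeff_mul_pow _ hr (norm_ofReal_le_norm_ofReal_add_I x)
  have hexp : r ^ ((p m).natDegree : ℤ) * r ^ (-(k + 1) - m) ≤ r ^ (s0 M p - k - 1) := by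
    rw [← zpow_add₀ (by positivity)]
    exact zpow_le_zpow_right₀ hr (by linarith)
  calc ‖(p m).eval (x : ℂ) * deriv^[m] (ebasis k n) x‖
      ≤ (K * r ^ ((p m).natDegree : ℤ)) *
          ((2 * n + 3 * |(k : ℝ)| + m + 7) ^ m * r ^ (-(k + 1) - m)) := by
        rw [norm_mul]
        gcongr
        exact norm_iteratedDeriv_ebasis_le k n m x
    _ = K * (2 * n + 3 * |(k : ℝ)| + m + 7) ^ m *
          (r ^ ((p m).natDegree : ℤ) * r ^ (-(k + 1) - m)) := by ring
    _ ≤ K * (2 * n + 3 * |(k : ℝ)| + M + 7) ^ m * r ^ (s0 M p - k - 1) := by gcongr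
    _ = _ := by simp only [eval_mul, eval_pow, eval_add, eval_C, eval_X]; ring

lemma eval_bandBound_nonneg (M : ℕ) (p : ℕ → ℂ[X]) (k : ℤ) (n : ℕ) :
    0 ≤ (bandBound M p k).eval (n : ℝ) := by
  simp only [bandBound, eval_finsetSum, eval_mul, eval_pow, eval_add, eval_C, eval_X]
  exact Finset.sum_nonneg fun m _ ↦
    mul_nonneg (Finset.sum_nonneg fun _ _ ↦ norm_nonneg _) (by positivity)

lemma norm_bmat_integrand_le (M : ℕ) (p : ℕ → ℂ[X]) (k₀ kd : ℤ) (hkd : kd ≤ k₀ - s0 M p)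
    (m n : ℕ) (x : ℝ) :
    ‖Pop M p (ebasis k₀ n) x * starRingEnd ℂ (ebasis kd m x) * (((x ^ 2 + 1) ^ kd : ℝ) : ℂ)‖ ≤
      (bandBound M p k₀).eval (n : ℝ) * (1 + x ^ 2)⁻¹ := by
  set r := ‖(x : ℂ) + I‖
  have hr : 1 ≤ r := one_le_norm_ofReal_add_I x
  have hr2 : r ^ (2 : ℤ) = 1 + x ^ 2 := by rw [zpow_ofNat, sq_norm_ofReal_add_I]
  have hconj : ‖starRingEnd ℂ (ebasis kd m x)‖ ≤ r ^ (-(kd + 1)) := by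
    rw [RCLike.norm_conj]
    simpa using norm_iteratedDeriv_ebasis_le kd m 0 x
  have hweight : ‖(((x ^ 2 + 1) ^ kd : ℝ) : ℂ)‖ = r ^ (2 * kd) := by
    rw [norm_real, Real.norm_of_nonneg (by positivity), zpow_mul, hr2, add_comm]
  have hexp : r ^ (s0 M p - k₀ - 1) * r ^ (-(kd + 1)) * r ^ (2 * kd) ≤ (1 + x ^ 2)⁻¹ := by
    rw [← zpow_add₀ (by positivity), ← zpow_add₀ (by positivity), ← hr2, ← zpow_neg]
    exact zpow_le_zpow_right₀ hr (by linarith)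
  have hPop := norm_Pop_ebasis_le M p k₀ n x
  set B := (bandBound M p k₀).eval (n : ℝ)
  calc _ ≤ (B * r ^ (s0 M p - k₀ - 1)) * r ^ (-(kd + 1)) * r ^ (2 * kd) := by
        rw [norm_mul, norm_mul, hweight]
        gcongr
        exact (norm_nonneg _).trans hPop
    _ = B * (r ^ (s0 M p - k₀ - 1) * r ^ (-(kd + 1)) * r ^ (2 * kd)) := by ring
    _ ≤ B * (1 + x ^ 2)⁻¹ := by gcongr; exact eval_bandBound_nonneg M p k₀ n

lemma norm_bmat_le (M : ℕ) (p : ℕ → ℂ[X]) (k₀ kd : ℤ) (hkd : kd ≤ k₀ - s0 M p) (m n : ℕ) :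
    ‖bmat M p k₀ kd m n‖ ≤ Real.pi * (bandBound M p k₀).eval (n : ℝ) :=
  calc ‖bmat M p k₀ kd m n‖ ≤ ∫ x : ℝ, (bandBound M p k₀).eval (n : ℝ) * (1 + x ^ 2)⁻¹ :=
        norm_integral_le_of_norm_le (integrable_inv_one_add_sq.const_mul _)
          (.of_forall (norm_bmat_integrand_le M p k₀ kd hkd m n))
    _ = Real.pi * (bandBound M p k₀).eval (n : ℝ) := by
        rw [integral_const_mul, integral_univ_inv_one_add_sq, mul_comm]

theorem stmt11_general (M : ℕ) (p : ℕ → Polynomial ℂ)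
    (k₀ : ℤ) (kd : ℤ) (hkd : kd ≤ k₀ - s0 M p) :
    ∃ A : Polynomial ℝ, A.natDegree ≤ M ∧
      ∀ m n : ℕ, ‖bmat M p k₀ kd m n‖ ≤ A.eval (n : ℝ) := by
  refine ⟨C Real.pi * bandBound M p k₀,
    (natDegree_C_mul_le _ _).trans (natDegree_bandBound_le M p k₀), fun m n ↦ ?_⟩
  rw [eval_mul, eval_C]
  exact norm_bmat_le M p k₀ kd hkd m n

/-- In the band-matrix setup (polynomial coefficients `p_0, …, p_M`
with `p_M ≠ 0`, integer `k₀ ≥ 0` and `k₀◊ ≤ k₀ - s₀`): there exists a real polynomial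
`A` of degree at most `M` such that `|b_m^n| ≤ A(n)` for all `m, n ∈ ℕ`. -/
theorem stmt11 (M : ℕ) (hM : 1 ≤ M) (p : ℕ → Polynomial ℂ) (hpM : p M ≠ 0)
    (k₀ : ℤ) (hk₀ : 0 ≤ k₀) (kd : ℤ) (hkd : kd ≤ k₀ - s0 M p) :
    ∃ A : Polynomial ℝ, A.natDegree ≤ M ∧
      ∀ m n : ℕ, ‖bmat M p k₀ kd m n‖ ≤ A.eval (n : ℝ) :=
  stmt11_general M p k₀ kd hkd
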